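/- arXiv:1508.06817 — 3 statements merged into one kernel-verified Lean document; each statement's English description precedes it below -/
import Mathlib

section
/- Let (W,S) be a finite Coxeter system with set of reflections T and let c = s_1 s_2 ⋯ s_n be a standard Coxeter element. In the monoid presented by generators { b_t : t ∈ T } subject to the dual braid relations b_{t_1} b_{t_2} = b_{t_2} b_{t_3} (for t_1, t_2, t_3 ∈ T with t_1 t_2 = t_2 t_3 and t_1 t_2 ≼_T c), the generators indexed by elements of S satisfy the Artin braid relations: for all s, s' ∈ S, b_s b_{s'} b_s ⋯ = b_{s'} b_s b_{s'} ⋯ with m_{s,s'} alternating factors on each side, where m_{s,s'} is the order of s s' in W. Consequently there is a monoid homomorphism from the Artin–Tits monoid B⁺(W) to this presented monoid sending each Artin generator b_s to the dual generator b_s. -/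
/-- The length `ℓ_T` of `w` with respect to the set `T` of all reflections. -/
noncomputable def reflLength {B W : Type} [Group W] {M : CoxeterMatrix B}
    (cs : CoxeterSystem M W) (w : W) : ℕ :=
  sInf { k | ∃ l : List W, l.length = k ∧ (∀ t ∈ l, cs.IsReflection t) ∧ l.prod = w }

/-- `x ≼_T y` : divisibility with respect to the absolute (reflection) length. -/
def reflDvd {B W : Type} [Group W] {M : CoxeterMatrix B}
    (cs : CoxeterSystem M W) (x y : W) : Prop :=
  reflLength cs x + reflLength cs (x⁻¹ * y) = reflLength cs y

/-- The dual braid relations on the generating set `{ b_t : t ∈ T }`: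
`b_{t₁} b_{t₂} = b_{t₂} b_{t₃}` whenever `t₁ t₂ = t₂ t₃` and `t₁ t₂ ≼_T c`. -/
def dualBraidRels {B W : Type} [Group W] {M : CoxeterMatrix B}
    (cs : CoxeterSystem M W) (c : W) :
    FreeMonoid { t : W // cs.IsReflection t } → FreeMonoid { t : W // cs.IsReflection t } → Prop :=
  fun u v => ∃ t₁ t₂ t₃ : { t : W // cs.IsReflection t },
    u = FreeMonoid.of t₁ * FreeMonoid.of t₂ ∧ v = FreeMonoid.of t₂ * FreeMonoid.of t₃ ∧
    (t₁ : W) * (t₂ : W) = (t₂ : W) * (t₃ : W) ∧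
    reflDvd cs ((t₁ : W) * (t₂ : W)) c

/-- The Artin–Tits (braid) relations on the generating set `{ b_s : s ∈ S }`:
the alternating words `b_s b_{s'} b_s ⋯` and `b_{s'} b_s b_{s'} ⋯` with `m_{s,s'}`
factors on each side are identified. -/
def artinMonoidRels {B : Type} (M : CoxeterMatrix B) :
    FreeMonoid B → FreeMonoid B → Prop :=
  fun u v => ∃ i j : B,
    u = ((CoxeterSystem.braidWord M i j).map FreeMonoid.of).prod ∧
    v = ((CoxeterSystem.braidWord M j i).map FreeMonoid.of).prod

/-!
For simple reflections `s, s'` put `tₖ = s (s s')ᵏ`. These are reflections with `tₖ tₖ₊₁ = s s'`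
for every `k` and `tₘ = t₀` for `m = m(s, s')`. If `s s' ≼_T c`, the dual braid relations give
`b_{tₖ} b_{tₖ₊₁} = b_{tₖ₊₁} b_{tₖ₊₂}`, so all products of two consecutive `b_{tₖ}` agree, and
together with the periodicity this turns `b_s b_{s'} b_s ⋯` into `b_{s'} b_s b_{s'} ⋯`.

Up to swapping `s` and `s'` we may write `c = a s b s' d` with words `a, b, d`, and `n = |S|`.
Then `(s s')⁻¹ c` is a product of conjugates of the `n - 2` letters of `a, b, d`, so
`ℓ_T(s s') + ℓ_T((s s')⁻¹ c) ≤ n`, and `s s' ≼_T c` follows from `ℓ_T(c) ≥ n`. For the latter, in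
the geometric representation a product of `k` reflections moves vectors only inside a subspace of
dimension at most `k`, whereas `c` fixes no nonzero vector: a vector fixed by `c` is fixed by every
simple reflection (the simple roots are linearly independent), and averaging over the finite group
`W` kills every simple root `α_i`, since `s_i α_i = -α_i`.
-/

open CoxeterSystem

section ReflectionLength

variable {B W : Type} [Group W] {M : CoxeterMatrix B} (cs : CoxeterSystem M W)

theorem reflLength_prod_le {L : List W} (hL : ∀ t ∈ L, cs.IsReflection t) :
    reflLength cs L.prod ≤ L.length :=
  Nat.sInf_le ⟨L, rfl, hL, rfl⟩

theorem reflLength_wordProd_le (ω : List B) : reflLength cs (cs.wordProd ω) ≤ ω.length := by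
  have h := reflLength_prod_le cs (L := ω.map cs.simple) (by simp [cs.isReflection_simple])
  rwa [List.length_map] at h

theorem exists_reflection_list_length_eq_reflLength (w : W) :
    ∃ L : List W, L.length = reflLength cs w ∧ (∀ t ∈ L, cs.IsReflection t) ∧ L.prod = w := by
  obtain ⟨ω, rfl⟩ := cs.wordProd_surjective w
  show reflLength cs _ ∈
    {k | ∃ L : List W, L.length = k ∧ (∀ t ∈ L, cs.IsReflection t) ∧ L.prod = _}
  exact Nat.sInf_mem ⟨_, ω.map cs.simple, rfl, by simp [cs.isReflection_simple], rfl⟩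

theorem reflLength_mul_le (x y : W) :
    reflLength cs (x * y) ≤ reflLength cs x + reflLength cs y := by
  obtain ⟨L, hLlen, hL, rfl⟩ := exists_reflection_list_length_eq_reflLength cs x
  obtain ⟨L', hL'len, hL', rfl⟩ := exists_reflection_list_length_eq_reflLength cs y
  rw [← hLlen, ← hL'len, ← List.prod_append, ← List.length_append]
  exact reflLength_prod_le cs fun t ht => (List.mem_append.1 ht).elim (hL t) (hL' t)

theorem reflLength_conj_le (g w : W) : reflLength cs (g * w * g⁻¹) ≤ reflLength cs w := by
  obtain ⟨L, hLlen, hL, rfl⟩ := exists_reflection_list_length_eq_reflLength cs w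
  have hconj : (L.map (MulAut.conj g)).prod = g * L.prod * g⁻¹ :=
    (map_list_prod (MulAut.conj g) L).symm
  rw [← hconj, ← hLlen, ← L.length_map (MulAut.conj g)]
  refine reflLength_prod_le cs fun _ hmem => ?_
  obtain ⟨t, ht, rfl⟩ := List.mem_map.1 hmem
  exact (hL t ht).conj g

theorem reflDvd_of_add_le {x y : W}
    (h : reflLength cs x + reflLength cs (x⁻¹ * y) ≤ reflLength cs y) : reflDvd cs x y :=
  le_antisymm h (by simpa using reflLength_mul_le cs x (x⁻¹ * y))

end ReflectionLength

section AlternatingProducts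

theorem prod_map_alternatingWord_two_mul {N α : Type*} [Monoid N] (f : α → N) (i j : α) (q : ℕ) :
    ((alternatingWord i j (2 * q)).map f).prod = (f i * f j) ^ q := by
  induction q with
  | zero => simp [alternatingWord]
  | succ q ih =>
    rw [mul_add_one, alternatingWord_succ', alternatingWord_succ', if_neg (by simp [parity_simps]),
      if_pos (even_two_mul q), List.map_cons, List.map_cons, List.prod_cons, List.prod_cons, ih,
      pow_succ', mul_assoc]

theorem prod_map_alternatingWord_two_mul_add_one {N α : Type*} [Monoid N] (f : α → N) (i j : α)
    (q : ℕ) : ((alternatingWord i j (2 * q + 1)).map f).prod = f j * (f i * f j) ^ q := by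
  rw [alternatingWord_succ', if_pos (even_two_mul q), List.map_cons, List.prod_cons,
    prod_map_alternatingWord_two_mul]

variable {N : Type*} [Monoid N] {g : ℕ → N} (hg : ∀ k, g k * g (k + 1) = g (k + 1) * g (k + 2))
include hg

theorem mul_succ_eq_of_rotation (k : ℕ) : g k * g (k + 1) = g 0 * g 1 := by
  induction k with
  | zero => rfl
  | succ k ih => rw [← ih, hg k]

theorem mul_pow_eq_pow_mul_of_rotation (a q : ℕ) :
    g a * (g 0 * g 1) ^ q = (g 0 * g 1) ^ q * g (a + 2 * q) := by
  induction q generalizing a with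
  | zero => simp
  | succ q ih =>
    have hstep : g a * (g 0 * g 1) = (g 0 * g 1) * g (a + 2) := by
      rw [← mul_succ_eq_of_rotation hg (a + 1), ← mul_assoc, hg, mul_assoc]
    rw [pow_succ', ← mul_assoc, hstep, mul_assoc, ih, ← mul_assoc]
    ring_nf

theorem prod_alternatingWord_eq_of_rotation {α : Type*} (f : α → N) {i j : α}
    (hi : f i = g 0) (hj : f j = g 1) {m : ℕ} (hm : g m = g 0) :
    ((alternatingWord i j m).map f).prod = ((alternatingWord j i m).map f).prod := by
  obtain ⟨q, rfl | rfl⟩ := Nat.even_or_odd' m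
  · rw [prod_map_alternatingWord_two_mul, prod_map_alternatingWord_two_mul, hi, hj]
    cases q with
    | zero => simp
    | succ q =>
      calc (g 0 * g 1) ^ (q + 1) = g 1 * g 2 * (g 0 * g 1) ^ q := by
            rw [pow_succ', mul_succ_eq_of_rotation hg 1]
        _ = g 1 * ((g 0 * g 1) ^ q * g (2 * (q + 1))) := by
            rw [mul_assoc, mul_pow_eq_pow_mul_of_rotation hg]; ring_nf
        _ = (g 1 * g 0) ^ (q + 1) := by
            rw [hm, ← mul_assoc, ← mul_pow_mul, pow_succ, mul_assoc]
  · rw [prod_map_alternatingWord_two_mul_add_one, prod_map_alternatingWord_two_mul_add_one, hi, hj]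
    calc g 1 * (g 0 * g 1) ^ q = (g 0 * g 1) ^ q * g (2 * q + 1) := by
          rw [mul_pow_eq_pow_mul_of_rotation hg]; ring_nf
      _ = g 0 * (g 1 * g 0) ^ q := by rw [hm, mul_pow_mul]

end AlternatingProducts

section DihedralReflections

variable {B W : Type} [Group W] {M : CoxeterMatrix B} (cs : CoxeterSystem M W) (i j : B)

def dihedralReflection (k : ℕ) : W := cs.simple i * (cs.simple i * cs.simple j) ^ k

theorem dihedralReflection_zero : dihedralReflection cs i j 0 = cs.simple i := by
  simp [dihedralReflection]

theorem dihedralReflection_one : dihedralReflection cs i j 1 = cs.simple j := by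
  simp [dihedralReflection, cs.simple_mul_simple_cancel_left]

theorem dihedralReflection_mul_succ (k : ℕ) :
    dihedralReflection cs i j k * dihedralReflection cs i j (k + 1) =
      cs.simple i * cs.simple j := by
  have hconj : cs.simple i * (cs.simple i * cs.simple j) ^ k * cs.simple i =
      ((cs.simple i * cs.simple j)⁻¹) ^ k := by
    have h : cs.simple i * (cs.simple i * cs.simple j) * (cs.simple i)⁻¹ =
        (cs.simple i * cs.simple j)⁻¹ := by
      simp [mul_inv_rev, cs.inv_simple, ← mul_assoc, cs.simple_mul_simple_self]
    rw [← h, conj_pow, cs.inv_simple]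
  calc dihedralReflection cs i j k * dihedralReflection cs i j (k + 1)
      = (cs.simple i * (cs.simple i * cs.simple j) ^ k * cs.simple i) *
          (cs.simple i * cs.simple j) ^ (k + 1) := by
        simp only [dihedralReflection, mul_assoc]
    _ = cs.simple i * cs.simple j := by
        rw [hconj, inv_pow, pow_succ, inv_mul_cancel_left]

theorem dihedralReflection_add_two (k : ℕ) :
    dihedralReflection cs i j (k + 2) =
      (cs.simple i * cs.simple j)⁻¹ * dihedralReflection cs i j k *
        (cs.simple i * cs.simple j) := by
  rw [dihedralReflection, dihedralReflection, pow_succ' _ (k + 1), pow_succ, mul_inv_rev,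
    cs.inv_simple, cs.inv_simple]
  simp only [mul_assoc, cs.simple_mul_simple_cancel_left]

theorem isReflection_dihedralReflection (k : ℕ) :
    cs.IsReflection (dihedralReflection cs i j k) := by
  induction k using Nat.twoStepInduction with
  | zero => simpa [dihedralReflection_zero] using cs.isReflection_simple i
  | one => simpa [dihedralReflection_one] using cs.isReflection_simple j
  | more k ih _ =>
    rw [dihedralReflection_add_two, ← inv_inv (cs.simple i * cs.simple j), inv_inv]
    simpa using ih.conj (cs.simple i * cs.simple j)⁻¹

theorem dihedralReflection_add_coxeterMatrix (k : ℕ) :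
    dihedralReflection cs i j (k + M i j) = dihedralReflection cs i j k := by
  simp [dihedralReflection, pow_add, cs.simple_mul_simple_pow]

end DihedralReflections

section DualBraidMonoid

variable {B W : Type} [Group W] {M : CoxeterMatrix B} (cs : CoxeterSystem M W) (c : W)

def simpleDualGenerator (i : B) : PresentedMonoid (dualBraidRels cs c) :=
  PresentedMonoid.of (dualBraidRels cs c) ⟨cs.simple i, cs.isReflection_simple i⟩

theorem braid_simpleDualGenerator_of_reflDvd {i j : B}
    (hdvd : reflDvd cs (cs.simple i * cs.simple j) c) :
    ((braidWord M i j).map (simpleDualGenerator cs c)).prod =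
      ((braidWord M j i).map (simpleDualGenerator cs c)).prod := by
  let g (k : ℕ) : PresentedMonoid (dualBraidRels cs c) :=
    PresentedMonoid.of _ ⟨dihedralReflection cs i j k, isReflection_dihedralReflection cs i j k⟩
  have hrotate (k : ℕ) : g k * g (k + 1) = g (k + 1) * g (k + 2) :=
    PresentedMonoid.mk_eq_mk_of_rel ⟨_, _, _, rfl, rfl,
      by simp only [dihedralReflection_mul_succ], by rwa [dihedralReflection_mul_succ]⟩
  have hg {k : ℕ} {i' : B} (h : dihedralReflection cs i j k = cs.simple i') :
      simpleDualGenerator cs c i' = g k :=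
    congrArg (PresentedMonoid.of _) (Subtype.ext h.symm)
  rw [braidWord, braidWord, M.symmetric j i]
  exact prod_alternatingWord_eq_of_rotation hrotate _ (hg (dihedralReflection_zero cs i j))
    (hg (dihedralReflection_one cs i j))
    (congrArg (PresentedMonoid.of _)
      (Subtype.ext (by simpa using dihedralReflection_add_coxeterMatrix cs i j 0)))

end DualBraidMonoid

namespace Module

open Polynomial.Chebyshev Real

theorem reflection_mul_reflection_sq_eq_one {R V : Type*} [CommRing R] [AddCommGroup V]
    [Module R V] {x y : V} {f g : Dual R V} (hf : f x = 2) (hg : g y = 2) (hfy : f y = 0)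
    (hgx : g x = 0) : (reflection hf * reflection hg) ^ 2 = 1 := by
  ext z
  simp [pow_two, reflection_apply, hf, hg, hfy, hgx]
  module

variable {V : Type*} [AddCommGroup V] [Module ℝ V] {x y : V} {f g : Dual ℝ V}

theorem reflection_mul_reflection_pow_eq_one {m : ℕ} (hm : 3 ≤ m) (hf : f x = 2) (hg : g y = 2)
    (hfg : f y * g x = 4 * cos (π / m) ^ 2) :
    (reflection hf * reflection hg) ^ m = 1 := by
  -- `S_k(2 cos φ) sin φ = sin((k + 1) φ)` and `m φ = 2π` make both coefficients in Mathlib's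
  -- formula for `(r₁ r₂)ᵐ` vanish.
  set φ := 2 * (π / m) with hφ
  have hmφ : (m : ℝ) * φ = 2 * π := by
    rw [hφ]; field_simp
  have hsin : sin φ ≠ 0 := by
    have hm' : (3 : ℝ) ≤ m := by exact_mod_cast hm
    refine (sin_pos_of_pos_of_lt_pi (by positivity) ?_).ne'
    rw [hφ, mul_div_assoc', div_lt_iff₀ (by positivity)]
    nlinarith [pi_pos]
  have ht : f y * g x - 2 = 2 * cos φ := by
    rw [hfg, hφ, cos_two_mul]; ring
  have hS (k : ℤ) : (S ℝ k).eval (f y * g x - 2) = sin ((k + 1) * φ) / sin φ := by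
    rw [ht, eq_div_iff hsin, S_two_mul_real_cos]
  obtain ⟨q, rfl | rfl⟩ := Nat.even_or_odd' m
  · have hzero : (S ℝ (q - 1)).eval (f y * g x - 2) = 0 := by
      have : ((q - 1 : ℤ) + 1 : ℝ) * φ = π := by push_cast at hmφ ⊢; linarith
      rw [hS, this, sin_pi, zero_div]
    apply LinearEquiv.toLinearMap_injective
    rw [reflection_mul_reflection_pow hf hg, show ((2 * q : ℕ) - 2 : ℤ) / 2 = q - 1 by omega,
      show ((2 * q : ℕ) - 1 : ℤ) / 2 = q - 1 by omega, hzero]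
    simp
  · have hzero : (S ℝ q).eval (f y * g x - 2) + (S ℝ (q - 1)).eval (f y * g x - 2) = 0 := by
      have : ((q : ℤ) + 1 : ℝ) * φ = 2 * π - ((q - 1 : ℤ) + 1) * φ := by
        push_cast at hmφ ⊢; linarith
      rw [hS, hS, this, sin_two_pi_sub]
      ring
    apply LinearEquiv.toLinearMap_injective
    rw [reflection_mul_reflection_pow hf hg, show ((2 * q + 1 : ℕ) - 1 : ℤ) / 2 = q by omega,
      show ((2 * q + 1 : ℕ) - 3 : ℤ) / 2 = q - 1 by omega,
      show ((2 * q + 1 : ℕ) : ℤ) / 2 = q by omega,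
      show ((2 * q + 1 : ℕ) - 2 : ℤ) / 2 = q - 1 by omega, hzero]
    simp

end Module

namespace CoxeterMatrix

open Real

variable {B : Type} [Fintype B] [DecidableEq B] (M : CoxeterMatrix B)

-- `M i j = 0` encodes `m = ∞`; the junk value `π / 0 = 0` then gives the correct entry `-2`.
noncomputable def geometricCoroot (i : B) : Module.Dual ℝ (B → ℝ) :=
  LinearMap.proj i ∘ₗ (Matrix.of fun i j : B => -2 * cos (π / M i j)).mulVecLin

theorem geometricCoroot_single (i j : B) :
    M.geometricCoroot i (Pi.single j 1) = -2 * cos (π / M i j) := by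
  simp [geometricCoroot]

theorem geometricCoroot_single_self (i : B) : M.geometricCoroot i (Pi.single i 1) = 2 := by
  simp [geometricCoroot_single]

noncomputable def geometricReflection (i : B) : (B → ℝ) ≃ₗ[ℝ] (B → ℝ) :=
  Module.reflection (M.geometricCoroot_single_self i)

theorem isLiftable_geometricReflection : M.IsLiftable M.geometricReflection := by
  intro i j
  rcases eq_or_ne i j with rfl | hij
  · rw [M.diagonal, pow_one]
    ext v : 1
    exact Module.involutive_reflection _ v
  have hsymm : M.geometricCoroot j (Pi.single i 1) = -2 * cos (π / M i j) := by
    rw [geometricCoroot_single, M.symmetric j i]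
  obtain hm | hm | hm : M i j = 0 ∨ M i j = 2 ∨ 3 ≤ M i j := by
    have := M.off_diagonal i j hij
    omega
  · rw [hm, pow_zero]
  · rw [hm]
    refine Module.reflection_mul_reflection_sq_eq_one _ _ ?_ ?_
    · rw [geometricCoroot_single, hm]; simp
    · rw [hsymm, hm]; simp
  · refine Module.reflection_mul_reflection_pow_eq_one hm _ _ ?_
    rw [geometricCoroot_single, hsymm]
    ring

end CoxeterMatrix

namespace CoxeterSystem

variable {B W : Type} [Group W] [Fintype B] [DecidableEq B] {M : CoxeterMatrix B}
  (cs : CoxeterSystem M W)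

noncomputable def geometricRepresentation : W →* (B → ℝ) ≃ₗ[ℝ] (B → ℝ) :=
  cs.lift ⟨M.geometricReflection, M.isLiftable_geometricReflection⟩

theorem geometricRepresentation_simple (i : B) :
    cs.geometricRepresentation (cs.simple i) = M.geometricReflection i :=
  cs.lift_apply_simple _ i

end CoxeterSystem

section ReflectionRepresentation

open Module Submodule

variable {B W : Type} {K V : Type*} [Group W] {M : CoxeterMatrix B} (cs : CoxeterSystem M W)
  [Field K] [AddCommGroup V] [Module K V] (ρ : W →* V ≃ₗ[K] V) (α : Basis B K V)

theorem eq_zero_of_forall_simple_fixed [Finite W] [CharZero K]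
    (hneg : ∀ i, ρ (cs.simple i) (α i) = -α i) {v : V} (hv : ∀ i, ρ (cs.simple i) v = v) :
    v = 0 := by
  have := Fintype.ofFinite W
  let P : End K V := ∑ g : W, (ρ g : End K V)
  have hP (h : W) (u : V) : P (ρ h u) = P u := by
    simp only [P, LinearMap.sum_apply, LinearEquiv.coe_coe]
    exact Fintype.sum_equiv (Equiv.mulRight h) _ _ fun g => by simp
  have hP_zero : P = 0 := α.ext fun i => by
    have h := hP (cs.simple i) (α i)
    rw [hneg, map_neg] at h
    have h2 : (2 : K) • P (α i) = 0 := by rw [two_smul]; nth_rewrite 1 [← h]; exact neg_add_cancel _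
    exact (smul_eq_zero.mp h2).resolve_left two_ne_zero
  have hfixed (g : W) : ρ g v = v := by
    induction g using cs.simple_induction_left with
    | one => simp
    | mul_simple_left w i hw => rw [map_mul, LinearEquiv.mul_apply, hw, hv]
  have hPv : P v = Fintype.card W • v := by
    simp [P, hfixed, Finset.sum_const]
  rw [hP_zero, LinearMap.zero_apply, eq_comm, ← Nat.cast_smul_eq_nsmul K, smul_eq_zero] at hPv
  exact hPv.resolve_left (Nat.cast_ne_zero.mpr Fintype.card_ne_zero)

variable {cs ρ α} (hmove : ∀ i v, ρ (cs.simple i) v - v ∈ K ∙ α i)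
include hmove

theorem wordProd_apply_sub_mem_span (ω : List B) (v : V) :
    ρ (cs.wordProd ω) v - v ∈ span K (α '' {i | i ∈ ω}) := by
  induction ω with
  | nil => simp
  | cons i ω ih =>
    have hsplit : ρ (cs.wordProd (i :: ω)) v - v =
        (ρ (cs.simple i) (ρ (cs.wordProd ω) v) - ρ (cs.wordProd ω) v) +
          (ρ (cs.wordProd ω) v - v) := by
      rw [cs.wordProd_cons, map_mul, LinearEquiv.mul_apply]
      abel
    rw [hsplit]
    refine add_mem (span_mono ?_ (hmove i _)) (span_mono (Set.image_mono ?_) ih)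
    · simp
    · exact fun j hj => List.mem_cons_of_mem i hj

theorem forall_simple_fixed_of_wordProd_fixed {ω : List B} (hnd : ω.Nodup) {v : V}
    (hv : ρ (cs.wordProd ω) v = v) : ∀ i ∈ ω, ρ (cs.simple i) v = v := by
  induction ω with
  | nil => simp
  | cons i ω ih =>
    rw [List.nodup_cons] at hnd
    set u := ρ (cs.wordProd ω) v
    rw [cs.wordProd_cons, map_mul, LinearEquiv.mul_apply] at hv
    have hi : u - v ∈ span K (α '' {i}) := by
      rw [Set.image_singleton, ← neg_mem_iff, neg_sub, ← hv]
      exact hmove i u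
    have hdisj : Disjoint ({i} : Set B) {j | j ∈ ω} := by simpa using hnd.1
    have huv : u = v := sub_eq_zero.mp <| disjoint_def.mp
      (α.linearIndependent.disjoint_span_image hdisj) _ hi (wordProd_apply_sub_mem_span hmove ω v)
    intro j hj
    rcases List.mem_cons.mp hj with rfl | hj
    · rwa [show ρ (cs.wordProd ω) v = v from huv] at hv
    · exact ih hnd.2 huv j hj

theorem finrank_range_sub_one_le_one [FiniteDimensional K V] {t : W} (ht : cs.IsReflection t) :
    finrank K (LinearMap.range ((ρ t : End K V) - 1)) ≤ 1 := by
  obtain ⟨w, i, rfl⟩ := ht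
  have hrange : LinearMap.range ((ρ (w * cs.simple i * w⁻¹) : End K V) - 1) ≤ K ∙ ρ w (α i) := by
    rintro _ ⟨u, rfl⟩
    obtain ⟨a, ha⟩ := mem_span_singleton.mp (hmove i (ρ w⁻¹ u))
    refine mem_span_singleton.mpr ⟨a, ?_⟩
    rw [← map_smul, ha]
    simp [map_mul]
  refine (finrank_mono hrange).trans ((finrank_span_le_card _).trans ?_)
  simp

theorem finrank_range_sub_one_le_reflLength [FiniteDimensional K V] (w : W) :
    finrank K (LinearMap.range ((ρ w : End K V) - 1)) ≤ reflLength cs w := by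
  obtain ⟨L, hlen, hL, rfl⟩ := exists_reflection_list_length_eq_reflLength cs w
  rw [← hlen]
  clear hlen
  induction L with
  | nil =>
    have h : ((ρ [].prod : End K V) - 1 : End K V) = 0 := by ext; simp
    rw [h, LinearMap.range_zero, finrank_bot, List.length_nil]
  | cons t L ih =>
    have hsplit : (ρ (t :: L).prod : End K V) - 1 =
        ((ρ t : End K V) - 1) ∘ₗ (ρ L.prod : End K V) + ((ρ L.prod : End K V) - 1) := by
      ext v
      simp [map_mul]
    calc finrank K (LinearMap.range ((ρ (t :: L).prod : End K V) - 1))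
        ≤ finrank K ↥(LinearMap.range ((ρ t : End K V) - 1) ⊔
            LinearMap.range ((ρ L.prod : End K V) - 1)) := by
          rw [hsplit]
          exact finrank_mono ((LinearMap.range_add_le _ _).trans
            (sup_le_sup_right (LinearMap.range_comp_le_range _ _) _))
      _ ≤ finrank K (LinearMap.range ((ρ t : End K V) - 1)) +
            finrank K (LinearMap.range ((ρ L.prod : End K V) - 1)) :=
          finrank_add_le_finrank_add_finrank _ _
      _ ≤ (t :: L).length := by
          rw [List.length_cons, add_comm L.length]
          exact add_le_add (finrank_range_sub_one_le_one hmove (hL t List.mem_cons_self))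
            (ih fun t' ht' => hL t' (List.mem_cons_of_mem t ht'))

theorem finrank_le_reflLength_wordProd [Finite W] [CharZero K] [FiniteDimensional K V]
    (hneg : ∀ i, ρ (cs.simple i) (α i) = -α i) {l : List B} (hnd : l.Nodup)
    (hall : ∀ i, i ∈ l) : finrank K V ≤ reflLength cs (cs.wordProd l) := by
  have hinj : Function.Injective ((ρ (cs.wordProd l) : End K V) - 1 : End K V) := by
    rw [← LinearMap.ker_eq_bot, LinearMap.ker_eq_bot']
    intro v hv
    have hfixed : ρ (cs.wordProd l) v = v := sub_eq_zero.mp hv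
    exact eq_zero_of_forall_simple_fixed cs ρ α hneg fun i =>
      forall_simple_fixed_of_wordProd_fixed hmove hnd hfixed i (hall i)
  rw [← LinearMap.finrank_range_of_inj hinj]
  exact finrank_range_sub_one_le_reflLength hmove _

end ReflectionRepresentation

theorem List.exists_eq_append_cons_append_cons_or {α : Type*} {l : List α} {a b : α} (ha : a ∈ l)
    (hb : b ∈ l) (hab : a ≠ b) :
    (∃ A C D, l = A ++ a :: (C ++ b :: D)) ∨ (∃ A C D, l = A ++ b :: (C ++ a :: D)) := by
  obtain ⟨A, L, rfl⟩ := List.append_of_mem ha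
  rcases List.mem_append.mp hb with hbA | hbL
  · obtain ⟨A₁, A₂, rfl⟩ := List.append_of_mem hbA
    exact Or.inr ⟨A₁, A₂, L, by simp⟩
  · obtain ⟨C, D, rfl⟩ := List.append_of_mem ((List.mem_cons.mp hbL).resolve_left hab.symm)
    exact Or.inl ⟨A, C, D, rfl⟩

section CoxeterElement

open Module Submodule

variable {B W : Type} [Group W] [Finite W] [Fintype B] [DecidableEq B] {M : CoxeterMatrix B}
  (cs : CoxeterSystem M W)

theorem card_le_reflLength_wordProd {l : List B} (hnd : l.Nodup) (hall : ∀ i, i ∈ l) :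
    Fintype.card B ≤ reflLength cs (cs.wordProd l) := by
  rw [← finrank_fintype_fun_eq_card ℝ]
  refine finrank_le_reflLength_wordProd (ρ := cs.geometricRepresentation)
    (α := Pi.basisFun ℝ B) (fun i v => ?_) (fun i => ?_) hnd hall
  · rw [cs.geometricRepresentation_simple, CoxeterMatrix.geometricReflection,
      Module.reflection_apply, sub_sub_cancel_left, Pi.basisFun_apply]
    exact neg_mem (smul_mem _ _ (mem_span_singleton_self _))
  · rw [cs.geometricRepresentation_simple, CoxeterMatrix.geometricReflection, Pi.basisFun_apply,
      reflection_apply_self]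

theorem reflDvd_simple_mul_simple_wordProd {l A C D : List B} {i j : B} (hnd : l.Nodup)
    (hall : ∀ k, k ∈ l) (hl : l = A ++ i :: (C ++ j :: D)) :
    reflDvd cs (cs.simple i * cs.simple j) (cs.wordProd l) := by
  apply reflDvd_of_add_le
  have hquot : (cs.simple i * cs.simple j)⁻¹ * cs.wordProd l =
      (cs.simple j * cs.simple i) * cs.wordProd A * (cs.simple j * cs.simple i)⁻¹ *
        (cs.simple j * cs.wordProd C * (cs.simple j)⁻¹) * cs.wordProd D := by
    simp only [hl, cs.wordProd_append, cs.wordProd_cons, mul_inv_rev, cs.inv_simple, mul_assoc,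
      cs.simple_mul_simple_cancel_left]
  have hpair : reflLength cs (cs.simple i * cs.simple j) ≤ 2 := by
    simpa [cs.wordProd_cons] using reflLength_wordProd_le cs [i, j]
  have hrest := calc
    reflLength cs ((cs.simple i * cs.simple j)⁻¹ * cs.wordProd l)
      ≤ reflLength cs (cs.wordProd A) + reflLength cs (cs.wordProd C) +
          reflLength cs (cs.wordProd D) := by
        rw [hquot]
        refine (reflLength_mul_le cs _ _).trans (add_le_add ?_ le_rfl)
        exact (reflLength_mul_le cs _ _).trans
          (add_le_add (reflLength_conj_le cs _ _) (reflLength_conj_le cs _ _))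
    _ ≤ A.length + C.length + D.length := by
        gcongr <;> exact reflLength_wordProd_le cs _
  have hlen : l.length = A.length + C.length + D.length + 2 := by
    simp only [hl, List.length_append, List.length_cons]
    omega
  have hcard := card_le_reflLength_wordProd cs hnd hall
  have hnd_card := hnd.length_le_card
  omega

end CoxeterElement

/-- in the monoid presented by generators `{ b_t : t ∈ T }` and the dual
braid relations associated to a standard Coxeter element `c`, the generators indexed by
the simple reflections satisfy the Artin braid relations; consequently there is a monoid
homomorphism from the Artin–Tits monoid `B⁺(W)` sending each Artin generator `b_s` to
the corresponding dual generator. -/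
theorem simple_generators_satisfy_braid_relations_in_dual_monoid
    {B W : Type} [Group W] [Finite W]
    {M : CoxeterMatrix B} (cs : CoxeterSystem M W)
    (l : List B) (hnd : l.Nodup) (hall : ∀ i : B, i ∈ l)
    (c : W) (hc : c = cs.wordProd l) :
    (∀ i j : B,
      ((CoxeterSystem.braidWord M i j).map (fun k =>
        PresentedMonoid.of (dualBraidRels cs c)
          ⟨cs.simple k, cs.isReflection_simple k⟩)).prod =
      ((CoxeterSystem.braidWord M j i).map (fun k =>
        PresentedMonoid.of (dualBraidRels cs c)
          ⟨cs.simple k, cs.isReflection_simple k⟩)).prod) ∧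
    (∃ φ : PresentedMonoid (artinMonoidRels M) →* PresentedMonoid (dualBraidRels cs c),
      ∀ i : B, φ (PresentedMonoid.of (artinMonoidRels M) i) =
        PresentedMonoid.of (dualBraidRels cs c) ⟨cs.simple i, cs.isReflection_simple i⟩) := by
  classical
  have := Fintype.ofList l hall
  have hbraid (i j : B) : ((braidWord M i j).map (simpleDualGenerator cs c)).prod =
      ((braidWord M j i).map (simpleDualGenerator cs c)).prod := by
    rcases eq_or_ne i j with rfl | hij
    · rfl
    rcases List.exists_eq_append_cons_append_cons_or (hall i) (hall j) hij with
      ⟨A, C, D, hl⟩ | ⟨A, C, D, hl⟩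
    · exact braid_simpleDualGenerator_of_reflDvd cs c
        (hc ▸ reflDvd_simple_mul_simple_wordProd cs hnd hall hl)
    · exact (braid_simpleDualGenerator_of_reflDvd cs c
        (hc ▸ reflDvd_simple_mul_simple_wordProd cs hnd hall hl)).symm
  refine ⟨hbraid, PresentedMonoid.lift (simpleDualGenerator cs c) ?_, fun i => rfl⟩
  rintro _ _ ⟨i, j, rfl, rfl⟩
  simpa [map_list_prod, List.map_map, FreeMonoid.lift_comp_of] using hbraid i j
end

section
/- Let (W,S) be the dihedral Coxeter system I_2(m) with m ≥ 3, S = {s, t}, and let c = s t. Let T_c ⊆ B(W) be the set of entries of tuples in the Hurwitz orbit of (b_s, b_t) under the braid group on 2 strands. Then T_c = { π_k π_{k−1}⁻¹ : 1 ≤ k ≤ m }, where π_0 := 1 and π_k := b_s b_t b_s ⋯ (k alternating factors starting with b_s). -/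
/-- The set of Artin–Tits (braid) relations associated to a Coxeter matrix `M`. -/
def artinRels {B : Type} (M : CoxeterMatrix B) : Set (FreeGroup B) :=
  ⋃ (i : B) (j : B),
    {((CoxeterSystem.braidWord M i j).map FreeGroup.of).prod *
      (((CoxeterSystem.braidWord M j i).map FreeGroup.of).prod)⁻¹}

/-- The Artin–Tits group attached to a Coxeter matrix. -/
abbrev ArtinGroup {B : Type} (M : CoxeterMatrix B) : Type := PresentedGroup (artinRels M)

/-- The Artin generators `b_s`. -/
def artinGen {B : Type} (M : CoxeterMatrix B) (i : B) : ArtinGroup M :=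
  PresentedGroup.of i

/-- One Hurwitz move: a standard generator of the braid group acts on an adjacent pair
`(x, y)` of entries by `(x, y) ↦ (x y x⁻¹, x)`. -/
def HurwitzMove {G : Type} [Group G] (l l' : List G) : Prop :=
  ∃ (a b : List G) (x y : G), l = a ++ x :: y :: b ∧ l' = a ++ (x * y * x⁻¹) :: x :: b

/-- The orbit of a tuple (encoded as a list) under the Hurwitz action of the braid
group (the equivalence closure of the Hurwitz moves). -/
def hurwitzOrbit {G : Type} [Group G] (l : List G) : Set (List G) :=
  { l' | Relation.EqvGen HurwitzMove l l' }

/-- The alternating list `[a, b, a, …]` of length `k`, starting with `a`. -/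
def altList {G : Type} (a b : G) : ℕ → List G
  | 0 => []
  | k + 1 => a :: altList b a k

/-! ### Auxiliary material -/

theorem map_altWord {B G : Type} (f : B → G) (i j : B) (k : ℕ) :
    (CoxeterSystem.alternatingWord i j k).map f =
      if Even k then altList (f i) (f j) k else altList (f j) (f i) k := by
  induction k with
  | zero => simp [CoxeterSystem.alternatingWord, altList]
  | succ k ih =>
    rw [CoxeterSystem.alternatingWord_succ', List.map_cons, ih]
    rcases Nat.even_or_odd k with he | ho
    · simp [he, Nat.even_add_one, altList]
    · simp [Nat.not_even_iff_odd.mpr ho, Nat.even_add_one, altList]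

namespace DualAtomsAux

variable {G : Type} [Group G]

/-- `σ_k = π_k π_{k-1}⁻¹`. -/
def sig (a b : G) (k : ℕ) : G :=
  (altList a b k).prod * ((altList a b (k - 1)).prod)⁻¹

theorem altList_two_add (a b : G) (k : ℕ) :
    altList a b (k + 2) = a :: b :: altList a b k := rfl

theorem prod_two_add (a b : G) (k : ℕ) :
    (altList a b (k + 2)).prod = a * b * (altList a b k).prod := by
  rw [altList_two_add]; simp [mul_assoc]

theorem sig_one (a b : G) : sig a b 1 = a := by
  simp [sig, altList]

theorem sig_mul (a b : G) (k : ℕ) : sig a b (k + 2) * sig a b (k + 1) = a * b := by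
  show (altList a b (k + 2)).prod * ((altList a b (k + 1)).prod)⁻¹ *
      ((altList a b (k + 1)).prod * ((altList a b k).prod)⁻¹) = a * b
  rw [prod_two_add]
  group

theorem sig_rec (a b : G) (k : ℕ) : sig a b (k + 2) = a * b * (sig a b (k + 1))⁻¹ :=
  eq_mul_inv_of_mul_eq (sig_mul a b k)

section Braid

variable (a b : G) (m : ℕ) (hm : 3 ≤ m)
  (hbr : (altList a b m).prod = (altList b a m).prod)

include hbr in
theorem sig_base : sig a b (m + 1) = a := by
  show (altList a b (m + 1)).prod * ((altList a b m).prod)⁻¹ = a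
  have h1 : altList a b (m + 1) = a :: altList b a m := rfl
  rw [h1, List.prod_cons, ← hbr]
  group

include hbr in
theorem sig_period : ∀ k : ℕ, sig a b (k + 1 + m) = sig a b (k + 1) := by
  intro k
  induction k with
  | zero => rw [Nat.zero_add, Nat.add_comm 1 m, sig_base a b m hbr, sig_one]
  | succ k ih =>
    have h1 : k + 1 + 1 + m = (k + m) + 2 := by ring
    have h2 : k + m + 1 = k + 1 + m := by ring
    rw [h1, sig_rec, h2, ih, ← sig_rec]

include hm hbr in
theorem sig_reduce : ∀ j : ℕ, ∃ i : ℕ, 1 ≤ i ∧ i ≤ m ∧ sig a b (j + 1) = sig a b i := by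
  intro j
  induction j using Nat.strong_induction_on with
  | _ j ih =>
    by_cases hj : j + 1 ≤ m
    · exact ⟨j + 1, Nat.le_add_left 1 j, hj, rfl⟩
    · obtain ⟨j', rfl⟩ : ∃ j', j = j' + m := ⟨j - m, by omega⟩
      obtain ⟨i, hi1, hi2, hi3⟩ := ih j' (by omega)
      refine ⟨i, hi1, hi2, ?_⟩
      rw [show j' + m + 1 = j' + 1 + m by ring, sig_period a b m hbr]
      exact hi3

end Braid

theorem eq_pair_append {p q x y : G} {A B : List G}
    (h : ([p, q] : List G) = A ++ x :: y :: B) :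
    A = [] ∧ B = [] ∧ x = p ∧ y = q := by
  rcases A with _ | ⟨c, A⟩
  · simp only [List.nil_append, List.cons.injEq] at h
    obtain ⟨h1, h2, h3⟩ := h
    exact ⟨rfl, h3.symm, h1.symm, h2.symm⟩
  · exfalso
    have := congrArg List.length h
    simp at this
    omega

theorem hurwitzMove_pair_iff {x y : G} {l : List G} :
    HurwitzMove [x, y] l ↔ l = [x * y * x⁻¹, x] := by
  constructor
  · rintro ⟨A, B, p, q, h1, h2⟩
    obtain ⟨rfl, rfl, rfl, rfl⟩ := eq_pair_append h1
    simpa using h2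
  · rintro rfl
    exact ⟨[], [], x, y, rfl, rfl⟩

section Main

variable (a b : G) (m : ℕ) (hm : 3 ≤ m)
  (hbr : (altList a b m).prod = (altList b a m).prod)

/-- The candidate orbit set. -/
def S (a b : G) : Set (List G) := { l | ∃ k : ℕ, l = [sig a b (k + 2), sig a b (k + 1)] }

theorem move_S (k : ℕ) :
    HurwitzMove [sig a b (k + 2), sig a b (k + 1)] [sig a b (k + 3), sig a b (k + 2)] := by
  rw [hurwitzMove_pair_iff]
  have h : sig a b (k + 2) * sig a b (k + 1) * (sig a b (k + 2))⁻¹ = sig a b (k + 3) := by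
    rw [sig_mul, sig_rec a b (k + 1)]
  rw [h]

include hm hbr in
theorem ab_eq : ([a, b] : List G) = [sig a b (m - 1 + 2), sig a b (m - 1 + 1)] := by
  obtain ⟨n, rfl⟩ : ∃ n, m = n + 3 := ⟨m - 3, by omega⟩
  have e1 : n + 3 - 1 + 2 = n + 3 + 1 := by omega
  have e2 : n + 3 - 1 + 1 = n + 3 := by omega
  rw [e1, e2]
  have h1 : sig a b (n + 3 + 1) = a := sig_base a b (n + 3) hbr
  have h2 : sig a b (n + 3) = b := by
    have hmul := sig_mul a b (n + 2)
    rw [show n + 2 + 2 = n + 3 + 1 from rfl, h1] at hmul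
    exact mul_left_cancel hmul
  rw [h1, h2]

include hm hbr in
theorem ab_mem_S : ([a, b] : List G) ∈ S a b :=
  ⟨m - 1, ab_eq a b m hm hbr⟩

include hm hbr in
theorem S_closed_fwd {l l' : List G} (hl : l ∈ S a b) (h : HurwitzMove l l') : l' ∈ S a b := by
  obtain ⟨k, rfl⟩ := hl
  rw [hurwitzMove_pair_iff] at h
  subst h
  refine ⟨k + 1, ?_⟩
  have h : sig a b (k + 2) * sig a b (k + 1) * (sig a b (k + 2))⁻¹ = sig a b (k + 3) := by
    rw [sig_mul, sig_rec a b (k + 1)]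
  rw [h]

include hm hbr in
theorem S_closed_bwd {l l' : List G} (hl' : l' ∈ S a b) (h : HurwitzMove l l') : l ∈ S a b := by
  obtain ⟨A, B, x, y, h1, h2⟩ := h
  obtain ⟨k, hk⟩ := hl'
  rw [hk] at h2
  obtain ⟨rfl, rfl, hx, hy⟩ := eq_pair_append h2
  simp only [List.nil_append] at h1
  subst h1
  have hyval : y = x⁻¹ * (a * b) := by
    rw [← sig_mul a b k, ← hx, ← hy]
    group
  rcases k with _ | j
  · simp only [Nat.zero_add] at hy
    rw [hy, sig_one] at hyval ⊢
    have hyb : y = b := by rw [hyval]; group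
    rw [hyb]
    exact ab_mem_S a b m hm hbr
  · refine ⟨j, ?_⟩
    have hys : y = sig a b (j + 1) := by
      rw [hyval, hy, ← sig_mul a b j]
      group
    rw [hy, hys]

include hm hbr in
theorem orbit_eq_S : hurwitzOrbit [a, b] = S a b := by
  have key : ∀ x y : List G, Relation.EqvGen HurwitzMove x y → (x ∈ S a b ↔ y ∈ S a b) := by
    intro x y h
    induction h with
    | rel x y hxy =>
      exact ⟨fun hx => S_closed_fwd a b m hm hbr hx hxy,
             fun hy => S_closed_bwd a b m hm hbr hy hxy⟩
    | refl => exact Iff.rfl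
    | symm _ _ _ ih => exact ih.symm
    | trans _ _ _ _ _ ih1 ih2 => exact ih1.trans ih2
  ext l
  constructor
  · intro hl
    exact (key _ _ hl).mp (ab_mem_S a b m hm hbr)
  · rintro ⟨k, rfl⟩
    have chain : ∀ k : ℕ, Relation.EqvGen HurwitzMove
        ([sig a b 2, sig a b 1] : List G) [sig a b (k + 2), sig a b (k + 1)] := by
      intro k
      induction k with
      | zero => exact Relation.EqvGen.refl _
      | succ k ih =>
        exact Relation.EqvGen.trans _ _ _ ih (Relation.EqvGen.rel _ _ (move_S a b k))
    show Relation.EqvGen HurwitzMove [a, b] _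
    rw [ab_eq a b m hm hbr]
    exact Relation.EqvGen.trans _ _ _
      (Relation.EqvGen.symm _ _ (chain (m - 1))) (chain k)

include hm hbr in
theorem entries_eq :
    { β | ∃ l ∈ hurwitzOrbit [a, b], β ∈ l } =
      { β : G | ∃ k, 1 ≤ k ∧ k ≤ m ∧ β = sig a b k } := by
  rw [orbit_eq_S a b m hm hbr]
  ext β
  simp only [Set.mem_setOf_eq]
  constructor
  · rintro ⟨l, ⟨k, rfl⟩, hβ⟩
    simp only [List.mem_cons, List.not_mem_nil, or_false] at hβ
    rcases hβ with rfl | rfl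
    · exact sig_reduce a b m hm hbr (k + 1)
    · exact sig_reduce a b m hm hbr k
  · rintro ⟨k, hk1, hk2, rfl⟩
    obtain ⟨j, rfl⟩ : ∃ j, k = j + 1 := ⟨k - 1, by omega⟩
    exact ⟨[sig a b (j + 2), sig a b (j + 1)], ⟨j, rfl⟩, by simp⟩

end Main

end DualAtomsAux

/-- in the dihedral type `I₂(m)` (`m ≥ 3`) with `S = {s, t}`, `c = s t`,
the set `T_c` of entries of the Hurwitz orbit of `(b_s, b_t)` equals
`{ π_k π_{k−1}⁻¹ : 1 ≤ k ≤ m }`, where `π_k = b_s b_t b_s ⋯` (`k` alternating factors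
starting with `b_s`). -/
theorem dual_atoms_dihedral
    {m : ℕ} (hm : 3 ≤ m) {W : Type} [Group W]
    {M : CoxeterMatrix (Fin 2)} (hM : M 0 1 = m)
    (cs : CoxeterSystem M W)
    (Tc : Set (ArtinGroup M))
    (hTc : Tc = { β | ∃ l ∈ hurwitzOrbit [artinGen M 0, artinGen M 1], β ∈ l })
    (pk : ℕ → ArtinGroup M)
    (hpk : ∀ k, pk k = (altList (artinGen M 0) (artinGen M 1) k).prod) :
    Tc = { β | ∃ k : ℕ, 1 ≤ k ∧ k ≤ m ∧ β = pk k * (pk (k - 1))⁻¹ } := by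
  set g : Fin 2 → ArtinGroup M := artinGen M with hg
  have hM10 : M 1 0 = m := by rw [M.symmetric 1 0, hM]
  -- the braid relation holds in the Artin group
  have hrel1 : (PresentedGroup.mk (artinRels M))
      (((CoxeterSystem.braidWord M 0 1).map FreeGroup.of).prod *
        (((CoxeterSystem.braidWord M 1 0).map FreeGroup.of).prod)⁻¹) = 1 := by
    apply (QuotientGroup.eq_one_iff _).mpr
    apply Subgroup.subset_normalClosure
    exact Set.mem_iUnion.mpr ⟨0, Set.mem_iUnion.mpr ⟨1, rfl⟩⟩
  have hrel2 : ((CoxeterSystem.braidWord M 0 1).map g).prod =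
      ((CoxeterSystem.braidWord M 1 0).map g).prod := by
    rw [map_mul, map_inv, mul_inv_eq_one, map_list_prod, map_list_prod,
      List.map_map, List.map_map] at hrel1
    exact hrel1
  have hbr : (altList (g 0) (g 1) m).prod = (altList (g 1) (g 0) m).prod := by
    have e01 : (CoxeterSystem.braidWord M 0 1).map g =
        if Even m then altList (g 0) (g 1) m else altList (g 1) (g 0) m := by
      rw [CoxeterSystem.braidWord, hM, map_altWord]
    have e10 : (CoxeterSystem.braidWord M 1 0).map g =
        if Even m then altList (g 1) (g 0) m else altList (g 0) (g 1) m := by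
      rw [CoxeterSystem.braidWord, hM10, map_altWord]
    rw [e01, e10] at hrel2
    rcases Nat.even_or_odd m with he | ho
    · simpa [he] using hrel2
    · simpa [Nat.not_even_iff_odd.mpr ho] using hrel2.symm
  have hfun : ∀ k, pk k * (pk (k - 1))⁻¹ = DualAtomsAux.sig (g 0) (g 1) k := by
    intro k
    rw [hpk, hpk]
    rfl
  rw [hTc]
  simp only [hfun]
  exact DualAtomsAux.entries_eq (g 0) (g 1) m hm hbr
end

section
/- Let (W,S) be the dihedral Coxeter system I_2(m) with m ≥ 3, S = {s, t}, and let c = s t. Then every simple dual braid for c is a rational permutation braid: the identity element, the element bc := b_s b_t, and every element of T_c (the set of entries of tuples in the Hurwitz orbit of (b_s, b_t)) can each be written in the form b_x b_y⁻¹ with x, y ∈ W, hence each lies in the interval [Δ⁻¹, Δ] of B(W). -/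
/-- The Artin–Tits monoid `B⁺(W)`, viewed as the submonoid of `B(W)` generated by the
Artin generators. -/
def artinPos {B : Type} (M : CoxeterMatrix B) : Submonoid (ArtinGroup M) :=
  Submonoid.closure (Set.range (artinGen M))

/-- Left divisibility `u ≼ v` in the Artin–Tits group. -/
def braidLE {B : Type} {M : CoxeterMatrix B} (u v : ArtinGroup M) : Prop :=
  u⁻¹ * v ∈ artinPos M

namespace CoxeterSystem

section

variable {B : Type*}

/-- Unlike `alternatingWord i j k`, which ends with `j`, this word starts with `i`. -/
def altWord (i j : B) : ℕ → List B
  | 0 => []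
  | k + 1 => i :: altWord j i k

@[simp]
theorem altWord_zero (i j : B) : altWord i j 0 = [] := rfl

@[simp]
theorem altWord_succ (i j : B) (k : ℕ) : altWord i j (k + 1) = i :: altWord j i k := rfl

@[simp]
theorem length_altWord (i j : B) (k : ℕ) : (altWord i j k).length = k := by
  induction k generalizing i j with
  | zero => rfl
  | succ k ih => simp [ih]

theorem altWord_succ' (i j : B) (k : ℕ) :
    altWord i j (k + 1) = altWord i j k ++ [if Even k then i else j] := by
  induction k generalizing i j with
  | zero => rfl
  | succ k ih =>
    rw [altWord_succ, ih]
    by_cases hk : Even k <;> simp [hk, Nat.even_add_one]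

theorem altWord_eq_alternatingWord (i j : B) (k : ℕ) :
    altWord i j k = if Even k then alternatingWord i j k else alternatingWord j i k := by
  induction k generalizing i j with
  | zero => rfl
  | succ k ih =>
    rw [altWord_succ, ih]
    by_cases hk : Even k <;> simp [hk, Nat.even_add_one, alternatingWord_succ']

variable {W : Type*} [Group W] {M : CoxeterMatrix B} (cs : CoxeterSystem M W)

theorem wordProd_altWord_comm (i j : B) :
    cs.wordProd (altWord i j (M i j)) = cs.wordProd (altWord j i (M i j)) := by
  have h : cs.wordProd (alternatingWord i j (M i j)) =
      cs.wordProd (alternatingWord j i (M i j)) := by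
    rw [cs.wordProd_braidWord_eq, M.symmetric]
  rw [altWord_eq_alternatingWord, altWord_eq_alternatingWord]
  split_ifs
  exacts [h, h.symm]

theorem wordProd_altWord_mul_inv (i j : B) (k : ℕ) :
    cs.wordProd (altWord i j k) * (cs.wordProd (altWord j i k))⁻¹ =
      (cs.simple i * cs.simple j) ^ k := by
  induction k generalizing i j with
  | zero => simp
  | succ k ih =>
    calc cs.wordProd (altWord i j (k + 1)) * (cs.wordProd (altWord j i (k + 1)))⁻¹
        = cs.simple i * (cs.wordProd (altWord j i k) * (cs.wordProd (altWord i j k))⁻¹) *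
            cs.simple j := by
          simp only [altWord_succ, wordProd_cons, mul_inv_rev, inv_simple, mul_assoc]
      _ = (cs.simple i * cs.simple j) ^ (k + 1) := by
          rw [ih, ← mul_pow_mul, pow_succ, mul_assoc]

theorem not_isReduced_altWord {i j : B} (hM : M i j ≠ 0) {k : ℕ} (hk : M i j < k) :
    ¬cs.IsReduced (altWord i j k) := by
  rw [altWord_eq_alternatingWord]
  split_ifs
  · exact cs.not_isReduced_alternatingWord i j hM hk
  · rw [M.symmetric] at hM hk
    exact cs.not_isReduced_alternatingWord j i hM hk

theorem not_isReduced_cons_cons (i : B) (l : List B) : ¬cs.IsReduced (i :: i :: l) := by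
  intro h
  have hle := cs.length_wordProd_le l
  rw [IsReduced, wordProd_cons, wordProd_cons, simple_mul_simple_cancel_left] at h
  simp only [List.length_cons] at h
  omega

end

section

variable {W : Type*} [Group W] {M : CoxeterMatrix (Fin 2)} (cs : CoxeterSystem M W)

theorem _root_.CoxeterMatrix.apply_of_ne {i j : Fin 2} (hij : i ≠ j) : M i j = M 0 1 := by
  fin_cases i <;> fin_cases j <;> simp_all [M.symmetric 1 0]

theorem _root_.CoxeterMatrix.isLiftable_dihedralGroup :
    M.IsLiftable fun i ↦ DihedralGroup.sr (i.val : ZMod (M 0 1)) := by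
  intro i j
  fin_cases i <;> fin_cases j <;>
    simp [DihedralGroup.sr_mul_sr, DihedralGroup.r_pow, M.symmetric 1 0]

theorem orderOf_simple_mul_simple {i j : Fin 2} (hij : i ≠ j) :
    orderOf (cs.simple i * cs.simple j) = M i j := by
  set ψ := cs.lift ⟨_, M.isLiftable_dihedralGroup⟩
  have hψ : orderOf (ψ (cs.simple i * cs.simple j)) = M i j := by
    fin_cases i <;> fin_cases j <;>
      simp_all [ψ, DihedralGroup.sr_mul_sr, ← DihedralGroup.inv_r, M.symmetric 1 0]
  exact Nat.dvd_antisymm (orderOf_dvd_of_pow_eq_one (cs.simple_mul_simple_pow i j))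
    (hψ ▸ orderOf_map_dvd ψ _)

theorem eq_altWord_of_isReduced_cons {i j : Fin 2} (hij : i ≠ j) {l : List (Fin 2)}
    (hl : cs.IsReduced (i :: l)) : i :: l = altWord i j (l.length + 1) := by
  induction l generalizing i j with
  | nil => rfl
  | cons k l ih =>
    obtain rfl : k = j := by
      rcases eq_or_ne k i with rfl | hki
      · exact absurd hl (cs.not_isReduced_cons_cons k l)
      · omega
    exact congrArg (i :: ·) (ih hij.symm (by simpa using hl.drop 1))

theorem exists_eq_altWord_of_isReduced {ω : List (Fin 2)} (hω : cs.IsReduced ω) :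
    ∃ i j, i ≠ j ∧ ω = altWord i j ω.length := by
  cases ω with
  | nil => exact ⟨0, 1, by decide, rfl⟩
  | cons i l => exact ⟨i, i + 1, by omega, cs.eq_altWord_of_isReduced_cons (by omega) hω⟩

/-- The exchange condition in rank two: a left descent of an alternating element `t s t ⋯`
forces it to equal `s t s ⋯`. -/
theorem wordProd_altWord_eq_of_not_isReduced {i j : Fin 2} (hij : i ≠ j) {k : ℕ}
    (hred : cs.IsReduced (altWord j i k)) (hnot : ¬cs.IsReduced (altWord i j (k + 1))) :
    cs.wordProd (altWord i j k) = cs.wordProd (altWord j i k) := by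
  have hdesc : cs.length (cs.simple i * cs.wordProd (altWord j i k)) + 1 = k := by
    have := cs.length_simple_mul (cs.wordProd (altWord j i k)) i
    simp only [IsReduced, altWord_succ, wordProd_cons, List.length_cons,
      length_altWord] at hred hnot
    omega
  obtain ⟨ω, hω, hωw⟩ := cs.exists_isReduced (cs.simple i * cs.wordProd (altWord j i k))
  have hred' : cs.IsReduced (i :: ω) := by
    rw [IsReduced, wordProd_cons, ← hωw, simple_mul_simple_cancel_left, List.length_cons,
      ← hω.eq, ← hωw, hdesc, hred.eq, length_altWord]
  have hlen : ω.length + 1 = k := by rw [← hω.eq, ← hωw, hdesc]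
  have hword := cs.eq_altWord_of_isReduced_cons hij hred'
  rw [hlen] at hword
  rw [← hword, wordProd_cons, ← hωw, simple_mul_simple_cancel_left]

theorem isReduced_altWord {i j : Fin 2} (hij : i ≠ j) {k : ℕ} (hk : k ≤ M i j) :
    cs.IsReduced (altWord i j k) := by
  induction k generalizing i j with
  | zero => simp [IsReduced]
  | succ k ih =>
    have hred := ih hij.symm (by rw [M.symmetric]; omega)
    by_contra hnot
    have hk0 : k ≠ 0 := by
      rintro rfl
      exact hnot (by simp [IsReduced, length_simple])
    apply pow_ne_one_of_lt_orderOf hk0 (cs.orderOf_simple_mul_simple hij ▸ hk)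
    rw [← wordProd_altWord_mul_inv, cs.wordProd_altWord_eq_of_not_isReduced hij hred hnot,
      mul_inv_cancel]

theorem eq_wordProd_altWord_of_forall_length_le (hM : M 0 1 ≠ 0) {w₀ : W}
    (hw₀ : ∀ w, cs.length w ≤ cs.length w₀) : w₀ = cs.wordProd (altWord 0 1 (M 0 1)) := by
  obtain ⟨ω, hω, rfl⟩ := cs.exists_isReduced w₀
  obtain ⟨i, j, hij, hωij⟩ := cs.exists_eq_altWord_of_isReduced hω
  have hle : ω.length ≤ M 0 1 := by
    by_contra! h
    rw [← M.apply_of_ne hij] at hM h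
    exact cs.not_isReduced_altWord hM h (hωij ▸ hω)
  have hge : M 0 1 ≤ ω.length := by
    have := hw₀ (cs.wordProd (altWord 0 1 (M 0 1)))
    rwa [(cs.isReduced_altWord zero_ne_one le_rfl).eq, length_altWord, hω.eq] at this
  rw [hωij, le_antisymm hle hge]
  obtain ⟨rfl, rfl⟩ | ⟨rfl, rfl⟩ : (i = 0 ∧ j = 1) ∨ (i = 1 ∧ j = 0) := by omega
  · rfl
  · exact M.symmetric 1 0 ▸ cs.wordProd_altWord_comm 1 0

end

end CoxeterSystem

open CoxeterSystem

section Artin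

variable {B : Type} (M : CoxeterMatrix B)

theorem artinGen_mem_artinPos (i : B) : artinGen M i ∈ artinPos M :=
  Submonoid.subset_closure ⟨i, rfl⟩

theorem prod_map_artinGen_braidWord (i j : B) :
    ((braidWord M i j).map (artinGen M)).prod = ((braidWord M j i).map (artinGen M)).prod := by
  have hrel : PresentedGroup.mk (artinRels M) (((braidWord M i j).map FreeGroup.of).prod *
      (((braidWord M j i).map FreeGroup.of).prod)⁻¹) = 1 :=
    (QuotientGroup.eq_one_iff _).mpr <| Subgroup.subset_normalClosure <|
      Set.mem_iUnion.mpr ⟨i, Set.mem_iUnion.mpr ⟨j, rfl⟩⟩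
  rw [map_mul, map_inv, mul_inv_eq_one, map_list_prod, map_list_prod, List.map_map,
    List.map_map] at hrel
  exact hrel

def altBraid (i j : B) (k : ℕ) : ArtinGroup M := ((altWord i j k).map (artinGen M)).prod

/-- The Garside element of the standard parabolic subgroup generated by `b_i` and `b_j`. -/
def artinDelta (i j : B) : ArtinGroup M := altBraid M i j (M i j)

@[simp]
theorem altBraid_zero (i j : B) : altBraid M i j 0 = 1 := rfl

theorem altBraid_succ (i j : B) (k : ℕ) :
    altBraid M i j (k + 1) = artinGen M i * altBraid M j i k := by
  simp [altBraid]

theorem altBraid_succ' (i j : B) (k : ℕ) :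
    altBraid M i j (k + 1) = altBraid M i j k * artinGen M (if Even k then i else j) := by
  rw [altBraid, altBraid, altWord_succ', List.map_append, List.prod_append]
  simp

theorem altBraid_mem_artinPos (i j : B) (k : ℕ) : altBraid M i j k ∈ artinPos M :=
  Submonoid.list_prod_mem _ <| by
    simpa using fun l _ ↦ artinGen_mem_artinPos M l

theorem artinDelta_comm (i j : B) : artinDelta M i j = artinDelta M j i := by
  have h : ((alternatingWord i j (M i j)).map (artinGen M)).prod =
      ((alternatingWord j i (M i j)).map (artinGen M)).prod := by
    rw [prod_map_artinGen_braidWord, M.symmetric]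
  rw [artinDelta, artinDelta, M.symmetric j i, altBraid, altBraid, altWord_eq_alternatingWord,
    altWord_eq_alternatingWord]
  split_ifs
  exacts [h, h.symm]

variable {M}

theorem braidLE_refl (u : ArtinGroup M) : braidLE u u := by
  simp [braidLE]

theorem braidLE_trans {u v w : ArtinGroup M} (huv : braidLE u v) (hvw : braidLE v w) :
    braidLE u w := by
  simpa [braidLE, mul_assoc] using (artinPos M).mul_mem huv hvw

theorem braidLE_mul_right (u : ArtinGroup M) {p : ArtinGroup M} (hp : p ∈ artinPos M) :
    braidLE u (u * p) := by
  simpa [braidLE] using hp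

theorem braidLE_inv_of_mem {u v : ArtinGroup M} (hu : u ∈ artinPos M) (hv : v ∈ artinPos M) :
    braidLE u⁻¹ v := by
  simpa [braidLE] using (artinPos M).mul_mem hu hv

theorem braidLE_mul_inv {u v Δ : ArtinGroup M} (hu : braidLE u Δ) (hv : v ∈ artinPos M) :
    braidLE (u * v⁻¹) Δ := by
  simpa [braidLE, mul_assoc] using (artinPos M).mul_mem hv hu

theorem braidLE_inv_mul_inv_of_conj {u v u' v' Δ : ArtinGroup M} (hu : Δ * u = u' * Δ)
    (hv : Δ * v = v' * Δ) (hu' : u' ∈ artinPos M) (hv' : braidLE v' Δ) :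
    braidLE Δ⁻¹ (u * v⁻¹) := by
  have hv_inv : Δ * v⁻¹ = v'⁻¹ * Δ := by
    rw [eq_inv_mul_iff_mul_eq, ← mul_assoc, ← hv, mul_inv_cancel_right]
  have h : Δ * (u * v⁻¹) = u' * (v'⁻¹ * Δ) := by rw [← mul_assoc, hu, mul_assoc, hv_inv]
  simpa [braidLE, h] using (artinPos M).mul_mem hu' hv'

theorem braidLE_altBraid (i j : B) {k n : ℕ} (hkn : k ≤ n) :
    braidLE (altBraid M i j k) (altBraid M i j n) := by
  induction n, hkn using Nat.le_induction with
  | base => exact braidLE_refl _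
  | succ n _ ih =>
    rw [altBraid_succ']
    exact braidLE_trans ih (braidLE_mul_right _ (artinGen_mem_artinPos M _))

theorem braidLE_altBraid_artinDelta {i j : B} {k : ℕ} (hk : k ≤ M i j) :
    braidLE (altBraid M i j k) (artinDelta M i j) :=
  braidLE_altBraid i j hk

/-- Both sides are alternating braids of length `M i j + 1`. -/
theorem artinDelta_mul_artinGen (i j : B) :
    artinDelta M i j * artinGen M i =
      artinGen M (if Even (M i j) then i else j) * artinDelta M i j := by
  have key (x y : B) : altBraid M x y (M i j) * artinGen M (if Even (M i j) then x else y) =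
      artinGen M x * altBraid M y x (M i j) :=
    (altBraid_succ' M x y _).symm.trans (altBraid_succ M x y _)
  by_cases hm : Even (M i j)
  · calc artinDelta M i j * artinGen M i
        = altBraid M i j (M i j) * artinGen M (if Even (M i j) then i else j) := by
          rw [if_pos hm, artinDelta]
      _ = _ := by rw [key, if_pos hm, artinDelta_comm, artinDelta, M.symmetric]
  · calc artinDelta M i j * artinGen M i
        = altBraid M j i (M i j) * artinGen M (if Even (M i j) then j else i) := by
          rw [if_neg hm, artinDelta_comm, artinDelta, M.symmetric]
      _ = _ := by rw [key, if_neg hm, artinDelta]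

theorem artinDelta_mul_altBraid (i j : B) (k : ℕ) :
    artinDelta M i j * altBraid M i j k =
      (if Even (M i j) then altBraid M i j k else altBraid M j i k) * artinDelta M i j := by
  induction k generalizing i j with
  | zero => simp
  | succ k ih =>
    rw [altBraid_succ, ← mul_assoc, artinDelta_mul_artinGen, mul_assoc, artinDelta_comm M i j,
      ih, M.symmetric j i, artinDelta_comm M j i]
    by_cases hm : Even (M i j) <;> simp [hm, altBraid_succ, mul_assoc]

theorem braidLE_altBraid_mul_inv_artinDelta {i j : B} {k : ℕ} (hk : k < M i j) :
    braidLE (altBraid M i j (k + 1) * (altBraid M i j k)⁻¹) (artinDelta M i j) :=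
  braidLE_mul_inv (braidLE_altBraid_artinDelta hk) (altBraid_mem_artinPos M i j k)

theorem braidLE_inv_artinDelta_altBraid_mul_inv {i j : B} {k : ℕ} (hk : k < M i j) :
    braidLE (artinDelta M i j)⁻¹ (altBraid M i j (k + 1) * (altBraid M i j k)⁻¹) := by
  have hconj := artinDelta_mul_altBraid (M := M) i j
  by_cases hm : Even (M i j)
  · simp only [hm, if_true] at hconj
    exact braidLE_inv_mul_inv_of_conj (hconj _) (hconj _) (altBraid_mem_artinPos M i j _)
      (braidLE_altBraid_artinDelta hk.le)
  · simp only [hm, if_false] at hconj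
    refine braidLE_inv_mul_inv_of_conj (hconj _) (hconj _) (altBraid_mem_artinPos M j i _) ?_
    rw [artinDelta_comm]
    exact braidLE_altBraid_artinDelta (M.symmetric i j ▸ hk.le)

end Artin

section Hurwitz

variable {G : Type} [Group G]

variable (G) in
def hurwitzSwap : Equiv.Perm (G × G) where
  toFun p := (p.1 * p.2 * p.1⁻¹, p.1)
  invFun p := (p.2, p.2⁻¹ * p.1 * p.2)
  left_inv p := by simp [mul_assoc]
  right_inv p := by simp [mul_assoc]

@[simp]
theorem hurwitzSwap_apply (p : G × G) : hurwitzSwap G p = (p.1 * p.2 * p.1⁻¹, p.1) := rfl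

theorem HurwitzMove.exists_pair {l l' : List G} (h : HurwitzMove l l')
    (hl : l.length = 2 ∨ l'.length = 2) :
    ∃ p : G × G, l = [p.1, p.2] ∧ l' = [(hurwitzSwap G p).1, (hurwitzSwap G p).2] := by
  obtain ⟨a, b, x, y, rfl, rfl⟩ := h
  obtain ⟨rfl, rfl⟩ : a = [] ∧ b = [] := by
    simp only [List.length_append, List.length_cons] at hl
    exact ⟨List.eq_nil_of_length_eq_zero (by omega), List.eq_nil_of_length_eq_zero (by omega)⟩
  exact ⟨(x, y), rfl, rfl⟩

theorem exists_zpow_of_mem_hurwitzOrbit {x y : G} {l : List G} (hl : l ∈ hurwitzOrbit [x, y]) :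
    ∃ k : ℤ, l = [((hurwitzSwap G ^ k) (x, y)).1, ((hurwitzSwap G ^ k) (x, y)).2] := by
  let P (l : List G) : Prop :=
    ∃ k : ℤ, l = [((hurwitzSwap G ^ k) (x, y)).1, ((hurwitzSwap G ^ k) (x, y)).2]
  suffices ∀ l₁ l₂, Relation.EqvGen HurwitzMove l₁ l₂ → (P l₁ ↔ P l₂) from
    (this _ _ hl).mp ⟨0, rfl⟩
  intro l₁ l₂ h
  induction h with
  | rel l₁ l₂ h =>
    constructor
    · rintro ⟨k, rfl⟩
      obtain ⟨p, hp, rfl⟩ := h.exists_pair (.inl rfl)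
      obtain rfl : (hurwitzSwap G ^ k) (x, y) = p := by simpa [Prod.ext_iff] using hp
      exact ⟨k + 1, by rw [add_comm, zpow_one_add, Equiv.Perm.mul_apply]⟩
    · rintro ⟨k, hk⟩
      obtain ⟨p, rfl, hp⟩ := h.exists_pair (.inr (by simp [hk]))
      have : hurwitzSwap G p = (hurwitzSwap G ^ k) (x, y) := by
        simpa [Prod.ext_iff] using hp.symm.trans hk
      refine ⟨k - 1, ?_⟩
      rw [sub_eq_neg_add, zpow_add, zpow_neg_one, Equiv.Perm.mul_apply, ← this,
        Equiv.Perm.inv_def, Equiv.symm_apply_apply]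
  | refl => exact Iff.rfl
  | symm _ _ _ ih => exact ih.symm
  | trans _ _ _ _ _ ih₁ ih₂ => exact ih₁.trans ih₂

theorem exists_eq_fst_zpow_of_mem_hurwitzOrbit {x y β : G} {l : List G}
    (hl : l ∈ hurwitzOrbit [x, y]) (hβ : β ∈ l) :
    ∃ k : ℤ, β = ((hurwitzSwap G ^ k) (x, y)).1 := by
  obtain ⟨k, rfl⟩ := exists_zpow_of_mem_hurwitzOrbit hl
  rcases List.mem_pair.mp hβ with rfl | rfl
  · exact ⟨k, rfl⟩
  · refine ⟨k - 1, ?_⟩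
    rw [← add_sub_cancel 1 k, zpow_one_add, Equiv.Perm.mul_apply, hurwitzSwap_apply,
      add_sub_cancel]

theorem hurwitzSwap_pow_fst_mul_snd (p : G × G) (n : ℕ) :
    ((hurwitzSwap G ^ n) p).1 * ((hurwitzSwap G ^ n) p).2 = p.1 * p.2 := by
  induction n with
  | zero => rfl
  | succ n ih => simpa [pow_succ', mul_assoc] using ih

theorem hurwitzSwap_pow_succ_fst (p : G × G) (n : ℕ) :
    ((hurwitzSwap G ^ (n + 1)) p).1 = p.1 * p.2 * ((hurwitzSwap G ^ n) p).1⁻¹ := by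
  rw [pow_succ', Equiv.Perm.mul_apply, hurwitzSwap_apply, hurwitzSwap_pow_fst_mul_snd]

theorem Equiv.Perm.exists_lt_zpow_apply_eq_pow_apply {α : Type*} {f : Equiv.Perm α} {x : α}
    {N : ℕ} (hN : 0 < N) (hx : (f ^ N) x = x) (k : ℤ) : ∃ n < N, (f ^ k) x = (f ^ n) x := by
  refine ⟨(k % N).toNat, by have := Int.emod_lt_of_pos k (Int.natCast_pos.mpr hN); omega, ?_⟩
  have hfix : ((f ^ N) ^ (k / N)) x = x := Function.IsFixedPt.perm_zpow hx _
  rw [← zpow_natCast, Int.toNat_of_nonneg (Int.emod_nonneg _ (by omega))]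
  conv_lhs => rw [← Int.emod_add_mul_ediv k N, zpow_add, zpow_mul, Equiv.Perm.mul_apply,
    zpow_natCast, hfix]

end Hurwitz

section DualBraids

variable {B : Type} {M : CoxeterMatrix B}

theorem hurwitzSwap_pow_artinGen_fst (i j : B) (n : ℕ) :
    ((hurwitzSwap _ ^ n) (artinGen M i, artinGen M j)).1 =
      altBraid M i j (n + 1) * (altBraid M i j n)⁻¹ := by
  induction n with
  | zero => simp [altBraid_succ]
  | succ n ih =>
    rw [hurwitzSwap_pow_succ_fst, ih, altBraid_succ M i j (n + 1), altBraid_succ M j i n]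
    group

/-- `altBraid M i j (M i j + 1) = b_i Δ` while `altBraid M i j (M i j) = Δ`. -/
theorem hurwitzSwap_pow_artinGen (i j : B) :
    (hurwitzSwap _ ^ M i j) (artinGen M i, artinGen M j) = (artinGen M i, artinGen M j) := by
  have hfst : ((hurwitzSwap _ ^ M i j) (artinGen M i, artinGen M j)).1 = artinGen M i := by
    have hΔ : altBraid M j i (M i j) = altBraid M i j (M i j) := by
      simpa only [artinDelta, M.symmetric j i] using artinDelta_comm M j i
    rw [hurwitzSwap_pow_artinGen_fst, altBraid_succ, hΔ, mul_inv_cancel_right]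
  have hprod := hurwitzSwap_pow_fst_mul_snd (artinGen M i, artinGen M j) (M i j)
  rw [hfst] at hprod
  exact Prod.ext hfst (mul_left_cancel hprod)

theorem exists_eq_altBraid_mul_inv_of_mem_hurwitzOrbit {i j : B} (hM : 0 < M i j)
    {l : List (ArtinGroup M)} {β : ArtinGroup M}
    (hl : l ∈ hurwitzOrbit [artinGen M i, artinGen M j]) (hβ : β ∈ l) :
    ∃ k < M i j, β = altBraid M i j (k + 1) * (altBraid M i j k)⁻¹ := by
  obtain ⟨k, rfl⟩ := exists_eq_fst_zpow_of_mem_hurwitzOrbit hl hβ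
  obtain ⟨n, hn, hkn⟩ :=
    Equiv.Perm.exists_lt_zpow_apply_eq_pow_apply hM (hurwitzSwap_pow_artinGen i j) k
  exact ⟨n, hn, by rw [hkn, hurwitzSwap_pow_artinGen_fst]⟩

end DualBraids

theorem simple_dual_braids_are_rational_permutation_braids_dihedral_general
    {m : ℕ} (hm : 3 ≤ m) {W : Type} [Group W]
    {M : CoxeterMatrix (Fin 2)} (hM : M 0 1 = m)
    (cs : CoxeterSystem M W)
    (bw : W → ArtinGroup M)
    (hbw : ∀ l : List (Fin 2), cs.IsReduced l →
      bw (cs.wordProd l) = (l.map (artinGen M)).prod)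
    (w₀ : W) (hw₀ : ∀ w : W, cs.length w ≤ cs.length w₀)
    (Δ : ArtinGroup M) (hΔ : Δ = bw w₀)
    (Tc : Set (ArtinGroup M))
    (hTc : Tc = { β | ∃ l ∈ hurwitzOrbit [artinGen M 0, artinGen M 1], β ∈ l }) :
    ∀ β : ArtinGroup M,
      (β = 1 ∨ β = artinGen M 0 * artinGen M 1 ∨ β ∈ Tc) →
      (∃ x y : W, β = bw x * (bw y)⁻¹) ∧ (braidLE Δ⁻¹ β ∧ braidLE β Δ) := by
  subst hM
  have hbwF (k : ℕ) (hk : k ≤ M 0 1) : bw (cs.wordProd (altWord 0 1 k)) = altBraid M 0 1 k :=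
    hbw _ (cs.isReduced_altWord zero_ne_one hk)
  have hΔF : Δ = artinDelta M 0 1 := by
    rw [hΔ, cs.eq_wordProd_altWord_of_forall_length_le (by omega) hw₀, hbwF _ le_rfl, artinDelta]
  subst hΔF
  intro β hβ
  obtain ⟨k, hk, rfl⟩ | ⟨k, hk, rfl⟩ : (∃ k ≤ M 0 1, β = altBraid M 0 1 k) ∨
      ∃ k < M 0 1, β = altBraid M 0 1 (k + 1) * (altBraid M 0 1 k)⁻¹ := by
    rcases hβ with rfl | rfl | hβ
    · exact .inl ⟨0, by omega, rfl⟩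
    · exact .inl ⟨2, by omega, by simp [altBraid_succ]⟩
    · obtain ⟨l, hl, hβl⟩ := hTc ▸ hβ
      exact .inr (exists_eq_altBraid_mul_inv_of_mem_hurwitzOrbit (by omega) hl hβl)
  · refine ⟨⟨cs.wordProd (altWord 0 1 k), cs.wordProd (altWord 0 1 0), by
        rw [hbwF k hk, hbwF 0 (Nat.zero_le _), altBraid_zero, inv_one, mul_one]⟩,
      braidLE_inv_of_mem (altBraid_mem_artinPos M 0 1 _) (altBraid_mem_artinPos M 0 1 k),
      braidLE_altBraid_artinDelta hk⟩
  · exact ⟨⟨cs.wordProd (altWord 0 1 (k + 1)), cs.wordProd (altWord 0 1 k), by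
        rw [hbwF _ hk, hbwF _ hk.le]⟩,
      braidLE_inv_artinDelta_altBraid_mul_inv hk, braidLE_altBraid_mul_inv_artinDelta hk⟩

/-- in the dihedral type `I₂(m)` (`m ≥ 3`) with `S = {s, t}` and `c = st`,
every simple dual braid for `c` — that is, the identity, `bc = b_s b_t`, and every
element of `T_c` — can be written `b_x b_y⁻¹` with `x, y ∈ W`, hence lies in the
interval `[Δ⁻¹, Δ]`, i.e. is a rational permutation braid. -/
theorem simple_dual_braids_are_rational_permutation_braids_dihedral
    {m : ℕ} (hm : 3 ≤ m) {W : Type} [Group W] [Finite W]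
    {M : CoxeterMatrix (Fin 2)} (hM : M 0 1 = m)
    (cs : CoxeterSystem M W)
    (bw : W → ArtinGroup M)
    (hbw : ∀ l : List (Fin 2), cs.IsReduced l →
      bw (cs.wordProd l) = (l.map (artinGen M)).prod)
    (w₀ : W) (hw₀ : ∀ w : W, cs.length w ≤ cs.length w₀)
    (Δ : ArtinGroup M) (hΔ : Δ = bw w₀)
    (Tc : Set (ArtinGroup M))
    (hTc : Tc = { β | ∃ l ∈ hurwitzOrbit [artinGen M 0, artinGen M 1], β ∈ l }) :
    ∀ β : ArtinGroup M,
      (β = 1 ∨ β = artinGen M 0 * artinGen M 1 ∨ β ∈ Tc) →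
      (∃ x y : W, β = bw x * (bw y)⁻¹) ∧ (braidLE Δ⁻¹ β ∧ braidLE β Δ) :=
  simple_dual_braids_are_rational_permutation_braids_dihedral_general hm hM cs bw hbw w₀ hw₀ Δ hΔ Tc
    hTc
end
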